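/- arXiv:1001.2851 — 2 statements merged into one kernel-verified Lean document; each statement's English description precedes it below -/
import Mathlib

section
/- The group G acts transitively on the set of ordered pairs of distinct points of S: for all x, y, x', y' ∈ S with x ≠ y and x' ≠ y', there exists g ∈ G with g(x) = x' and g(y) = y'. -/
/-!
Points of `S` are the future null rays `x̃ = (1, x)`, on which `G` acts linearly. For `x ≠ y` the
null vectors `x̃, ỹ` satisfy `[x̃, ỹ] = 1 - ⟨x, y⟩ > 0`, so `x̃ = c (t + s)` and `ỹ = c (t - s)` for
a unit timelike `t` and a unit spacelike `s ⟂ t`. A product of Lorentz reflections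
`w ↦ w - 2 [v,w] / [v,v] • v` carries any such frame `(t, s)` to `(e₀, e₁)`; since `n ≥ 2` there is
room for one more spatial reflection fixing `e₀, e₁`, which puts the product in `SO₀(1,n)`.
Composing the map for `(x, y)` with the inverse of the map for `(x', y')` gives `g`.
-/

open MeasureTheory Matrix

noncomputable section

/-- The Lorentzian bilinear form `[x,y] = x₀y₀ − Σ_{i=1}^n x_i y_i` on `ℝ^{n+1}`. -/
def lform (n : ℕ) (x y : Fin (n+1) → ℝ) : ℝ :=
  x 0 * y 0 - ∑ i : Fin n, x i.succ * y i.succ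

/-- For `x ∈ S ⊂ ℝⁿ`, `x̃ = (1, x₁, …, x_n) ∈ ℝ^{n+1}`. -/
def tilde (n : ℕ) (x : EuclideanSpace ℝ (Fin n)) : Fin (n+1) → ℝ :=
  Fin.cons 1 (fun i => x i)

/-- Membership in `G = SO₀(1,n)`. -/
def IsLorentz (n : ℕ) (g : Matrix (Fin (n+1)) (Fin (n+1)) ℝ) : Prop :=
  (∀ x y : Fin (n+1) → ℝ, lform n (g.mulVec x) (g.mulVec y) = lform n x y)
    ∧ g.det = 1 ∧ 0 < g 0 0

/-- The conformal action of `G` on the sphere: `g(x)ᵢ = (g x̃)ᵢ / (g x̃)₀`. -/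
def sphAct (n : ℕ) (g : Matrix (Fin (n+1)) (Fin (n+1)) ℝ)
    (x : EuclideanSpace ℝ (Fin n)) : EuclideanSpace ℝ (Fin n) :=
  WithLp.toLp 2 (fun i : Fin n => g.mulVec (tilde n x) i.succ / g.mulVec (tilde n x) 0)

/-- The conformal factor `κ(g,x) = (g x̃)₀⁻¹`. -/
def kappa (n : ℕ) (g : Matrix (Fin (n+1)) (Fin (n+1)) ℝ)
    (x : EuclideanSpace ℝ (Fin n)) : ℝ :=
  (g.mulVec (tilde n x) 0)⁻¹

def lformDual (n : ℕ) (v : Fin (n+1) → ℝ) : Fin (n+1) → ℝ :=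
  Fin.cons (v 0) fun i => -v i.succ

def PreservesLform (n : ℕ) (g : Matrix (Fin (n+1)) (Fin (n+1)) ℝ) : Prop :=
  ∀ x y : Fin (n+1) → ℝ, lform n (g *ᵥ x) (g *ᵥ y) = lform n x y

def lreflection (n : ℕ) (v : Fin (n+1) → ℝ) : Matrix (Fin (n+1)) (Fin (n+1)) ℝ :=
  1 + vecMulVec (-(2 / lform n v v) • v) (lformDual n v)

section

variable {n : ℕ}

lemma lform_comm (x y : Fin (n+1) → ℝ) : lform n x y = lform n y x := by
  simp only [lform, mul_comm]

lemma lform_add_left (x y z : Fin (n+1) → ℝ) :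
    lform n (x + y) z = lform n x z + lform n y z := by
  simp only [lform, Pi.add_apply, add_mul, Finset.sum_add_distrib]; ring

lemma lform_sub_left (x y z : Fin (n+1) → ℝ) :
    lform n (x - y) z = lform n x z - lform n y z := by
  simp only [lform, Pi.sub_apply, sub_mul, Finset.sum_sub_distrib]; ring

lemma lform_smul_left (c : ℝ) (x y : Fin (n+1) → ℝ) :
    lform n (c • x) y = c * lform n x y := by
  simp only [lform, Pi.smul_apply, smul_eq_mul, mul_assoc, ← Finset.mul_sum]; ring

lemma lform_add_right (x y z : Fin (n+1) → ℝ) :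
    lform n x (y + z) = lform n x y + lform n x z := by
  rw [lform_comm, lform_add_left, lform_comm y, lform_comm z]

lemma lform_sub_right (x y z : Fin (n+1) → ℝ) :
    lform n x (y - z) = lform n x y - lform n x z := by
  rw [lform_comm, lform_sub_left, lform_comm y, lform_comm z]

lemma lform_smul_right (c : ℝ) (x y : Fin (n+1) → ℝ) :
    lform n x (c • y) = c * lform n x y := by
  rw [lform_comm, lform_smul_left, lform_comm]

lemma lform_neg_left (x y : Fin (n+1) → ℝ) : lform n (-x) y = -lform n x y := by
  simpa using lform_smul_left (-1) x y

lemma lform_single_zero_left (w : Fin (n+1) → ℝ) : lform n (Pi.single 0 1) w = w 0 := by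
  simp [lform]

lemma lform_single_zero_self : lform n (Pi.single 0 1) (Pi.single 0 1) = 1 := by
  rw [lform_single_zero_left, Pi.single_eq_same]

lemma lform_single_succ_left (i : Fin n) (w : Fin (n+1) → ℝ) :
    lform n (Pi.single i.succ 1) w = -w i.succ := by
  simp [lform, Pi.single_apply]

lemma lform_self_neg_of_apply_zero {v : Fin (n+1) → ℝ} (h0 : v 0 = 0) (hv : v ≠ 0) :
    lform n v v < 0 := by
  obtain ⟨i, hi⟩ : ∃ i : Fin n, v i.succ ≠ 0 := by
    by_contra! h
    exact hv (funext fun p => Fin.cases h0 h p)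
  have : 0 < ∑ i : Fin n, v i.succ * v i.succ :=
    Finset.sum_pos' (fun i _ => mul_self_nonneg _) ⟨i, Finset.mem_univ _, mul_self_pos.mpr hi⟩
  simp only [lform, h0]
  linarith

lemma lform_pos_of_timelike {u v : Fin (n+1) → ℝ} (hu : 0 < lform n u u) (hv : 0 < lform n v v)
    (hu0 : 0 < u 0) (hv0 : 0 < v 0) : 0 < lform n u v := by
  have hcs := Finset.sum_mul_sq_le_sq_mul_sq Finset.univ (fun i : Fin n => u i.succ)
    (fun i : Fin n => v i.succ)
  simp only [lform, ← sq] at hu hv ⊢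
  have ha := Finset.sum_nonneg fun i (_ : i ∈ Finset.univ) => sq_nonneg (u (Fin.succ i))
  have hb := Finset.sum_nonneg fun i (_ : i ∈ Finset.univ) => sq_nonneg (v (Fin.succ i))
  nlinarith [mul_pos hu0 hv0, mul_lt_mul'' (sub_pos.mp hu) (sub_pos.mp hv) ha hb]

lemma lformDual_dotProduct (v w : Fin (n+1) → ℝ) : lformDual n v ⬝ᵥ w = lform n v w := by
  simp [lformDual, dotProduct, Fin.sum_univ_succ, lform, sub_eq_add_neg]

lemma PreservesLform.mul {g h : Matrix (Fin (n+1)) (Fin (n+1)) ℝ} (hg : PreservesLform n g)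
    (hh : PreservesLform n h) : PreservesLform n (g * h) := by
  intro x y
  rw [← mulVec_mulVec, ← mulVec_mulVec, hg, hh]

lemma PreservesLform.apply_zero_zero {g : Matrix (Fin (n+1)) (Fin (n+1)) ℝ}
    (hg : PreservesLform n g) {t : Fin (n+1) → ℝ} (ht : g *ᵥ t = Pi.single 0 1) :
    g 0 0 = t 0 := by
  calc g 0 0 = lform n (Pi.single 0 1) (g *ᵥ Pi.single 0 1) := by
        rw [lform_single_zero_left, mulVec_single_one]; rfl
    _ = lform n (g *ᵥ t) (g *ᵥ Pi.single 0 1) := by rw [ht]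
    _ = t 0 := by rw [hg, lform_comm, lform_single_zero_left]

lemma lreflection_mulVec (v w : Fin (n+1) → ℝ) :
    lreflection n v *ᵥ w = w - (2 / lform n v v * lform n v w) • v := by
  rw [lreflection, add_mulVec, one_mulVec, vecMulVec_mulVec, op_smul_eq_smul,
    lformDual_dotProduct, smul_smul, sub_eq_add_neg, ← neg_smul, mul_neg, mul_comm]

lemma det_lreflection {v : Fin (n+1) → ℝ} (hv : lform n v v ≠ 0) : (lreflection n v).det = -1 := by
  rw [lreflection, vecMulVec_eq Unit, det_one_add_replicateCol_mul_replicateRow, dotProduct_smul,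
    lformDual_dotProduct, smul_eq_mul]
  field_simp
  ring

lemma preservesLform_lreflection {v : Fin (n+1) → ℝ} (hv : lform n v v ≠ 0) :
    PreservesLform n (lreflection n v) := by
  intro x y
  simp only [lreflection_mulVec, lform_sub_left, lform_sub_right, lform_smul_left,
    lform_smul_right, lform_comm x v]
  field_simp
  ring

lemma lreflection_mulVec_of_lform_eq_zero {v w : Fin (n+1) → ℝ} (h : lform n v w = 0) :
    lreflection n v *ᵥ w = w := by
  rw [lreflection_mulVec, h, mul_zero, zero_smul, sub_zero]

lemma lreflection_mulVec_self {v : Fin (n+1) → ℝ} (hv : lform n v v ≠ 0) :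
    lreflection n v *ᵥ v = -v := by
  rw [lreflection_mulVec, div_mul_cancel₀ _ hv, two_smul, sub_add_cancel_left]

lemma lreflection_sub_mulVec {u u' : Fin (n+1) → ℝ} (hu : lform n u u = lform n u' u')
    (h : lform n (u - u') (u - u') ≠ 0) : lreflection n (u - u') *ᵥ u = u' := by
  have key : lform n (u - u') (u - u') = 2 * lform n (u - u') u := by
    simp only [lform_sub_left, lform_sub_right, lform_comm u' u] at h ⊢
    linarith
  have h2 : lform n (u - u') u ≠ 0 := fun h0 => h (by rw [key, h0, mul_zero])
  rw [lreflection_mulVec, key, div_mul_eq_div_div, div_self two_ne_zero, one_div_mul_cancel h2,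
    one_smul, sub_sub_cancel]

lemma mulVec_single_zero_apply (g : Matrix (Fin (n+1)) (Fin (n+1)) ℝ) (i : Fin (n+1)) :
    (g *ᵥ Pi.single 0 1) i = g i 0 := by
  rw [mulVec_single_one]; rfl

lemma IsLorentz.mulVec_inv_mulVec {g : Matrix (Fin (n+1)) (Fin (n+1)) ℝ} (hg : IsLorentz n g)
    (v : Fin (n+1) → ℝ) : g *ᵥ (g⁻¹ *ᵥ v) = v := by
  rw [mulVec_mulVec, mul_nonsing_inv _ (by rw [hg.2.1]; exact isUnit_one), one_mulVec]

lemma IsLorentz.inv_mulVec_mulVec {g : Matrix (Fin (n+1)) (Fin (n+1)) ℝ} (hg : IsLorentz n g)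
    (v : Fin (n+1) → ℝ) : g⁻¹ *ᵥ (g *ᵥ v) = v := by
  rw [mulVec_mulVec, nonsing_inv_mul _ (by rw [hg.2.1]; exact isUnit_one), one_mulVec]

lemma IsLorentz.inv {g : Matrix (Fin (n+1)) (Fin (n+1)) ℝ} (hg : IsLorentz n g) :
    IsLorentz n g⁻¹ := by
  refine ⟨fun x y => by rw [← hg.1, hg.mulVec_inv_mulVec, hg.mulVec_inv_mulVec],
    by rw [det_nonsing_inv, hg.2.1, Ring.inverse_one], ?_⟩
  rw [← mulVec_single_zero_apply g⁻¹,
    ← PreservesLform.apply_zero_zero hg.1 (hg.mulVec_inv_mulVec _)]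
  exact hg.2.2

lemma IsLorentz.mul {g h : Matrix (Fin (n+1)) (Fin (n+1)) ℝ} (hg : IsLorentz n g)
    (hh : IsLorentz n h) : IsLorentz n (g * h) := by
  have hg' := hg.inv
  refine ⟨PreservesLform.mul hg.1 hh.1, by rw [det_mul, hg.2.1, hh.2.1, one_mul], ?_⟩
  calc 0 < lform n (g⁻¹ *ᵥ Pi.single 0 1) (h *ᵥ Pi.single 0 1) := by
        refine lform_pos_of_timelike ?_ ?_ ?_ ?_
        · rw [hg'.1, lform_single_zero_self]; exact one_pos
        · rw [hh.1, lform_single_zero_self]; exact one_pos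
        · rw [mulVec_single_zero_apply]; exact hg'.2.2
        · rw [mulVec_single_zero_apply]; exact hh.2.2
    _ = (g * h) 0 0 := by
        rw [← hg.1, hg.mulVec_inv_mulVec, lform_single_zero_left, mulVec_mulVec,
          mulVec_single_zero_apply]

lemma exists_preservesLform_mulVec_eq_single_succ (hn : 2 ≤ n) (i : Fin n)
    {u : Fin (n+1) → ℝ} (hu0 : u 0 = 0) (huu : lform n u u = -1) :
    ∃ R : Matrix (Fin (n+1)) (Fin (n+1)) ℝ, PreservesLform n R ∧ R.det = 1 ∧
      R *ᵥ Pi.single 0 1 = Pi.single 0 1 ∧ R *ᵥ u = Pi.single i.succ 1 := by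
  by_cases hu : u = Pi.single i.succ 1
  · exact ⟨1, fun x y => by simp only [one_mulVec], det_one, one_mulVec _, by rw [one_mulVec, hu]⟩
  have : Nontrivial (Fin n) := Fin.nontrivial_iff_two_le.mpr hn
  obtain ⟨j, hj⟩ := exists_ne i
  have hf : lform n (Pi.single j.succ 1) (Pi.single j.succ 1) ≠ 0 := by
    simp [lform_single_succ_left]
  have hd : lform n (u - Pi.single i.succ 1) (u - Pi.single i.succ 1) ≠ 0 :=
    (lform_self_neg_of_apply_zero (by simp [hu0]) (sub_ne_zero.mpr hu)).ne
  -- the reflection in `e_{j+1}` fixes `e₀` and `e_{i+1}` and makes the determinant `1`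
  refine ⟨lreflection n (Pi.single j.succ 1) * lreflection n (u - Pi.single i.succ 1),
    (preservesLform_lreflection hf).mul (preservesLform_lreflection hd),
    by rw [det_mul, det_lreflection hf, det_lreflection hd]; norm_num, ?_, ?_⟩
  · have h₁ : lform n (u - Pi.single i.succ 1) (Pi.single 0 1) = 0 := by
      rw [lform_comm, lform_single_zero_left]; simp [hu0]
    have h₂ : lform n (Pi.single j.succ 1) (Pi.single 0 1) = 0 := by
      simp [lform_single_succ_left]
    rw [← mulVec_mulVec, lreflection_mulVec_of_lform_eq_zero h₁,
      lreflection_mulVec_of_lform_eq_zero h₂]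
  · rw [← mulVec_mulVec, lreflection_sub_mulVec (by simp [huu, lform_single_succ_left]) hd,
      lreflection_mulVec_of_lform_eq_zero]
    simp [lform_single_succ_left, hj.symm]

lemma exists_isLorentz_mulVec_eq_single (hn : 2 ≤ n) (i : Fin n) {t s : Fin (n+1) → ℝ}
    (htt : lform n t t = 1) (ht0 : 0 < t 0) (hss : lform n s s = -1) (hts : lform n t s = 0) :
    ∃ L : Matrix (Fin (n+1)) (Fin (n+1)) ℝ, IsLorentz n L ∧
      L *ᵥ t = Pi.single 0 1 ∧ L *ᵥ s = Pi.single i.succ 1 := by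
  have he : lform n (Pi.single 0 1) (Pi.single 0 1) ≠ 0 := by
    rw [lform_single_zero_self]; exact one_ne_zero
  -- `t + e₀`, unlike `t - e₀`, is never null: reflecting in it sends `t` to `-e₀`
  have hv : lform n (t - -Pi.single 0 1) (t - -Pi.single 0 1) ≠ 0 := by
    simp only [sub_neg_eq_add, lform_add_left, lform_add_right, lform_comm t,
      lform_single_zero_left, Pi.single_eq_same, htt]
    linarith
  set L₁ := lreflection n (Pi.single 0 1) * lreflection n (t - -Pi.single 0 1)
  have hL₁ : PreservesLform n L₁ :=
    (preservesLform_lreflection he).mul (preservesLform_lreflection hv)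
  have hnorm : lform n t t = lform n (-Pi.single 0 1) (-Pi.single 0 1) := by
    rw [htt, lform_neg_left, lform_comm, lform_neg_left, neg_neg, lform_single_zero_self]
  have hL₁t : L₁ *ᵥ t = Pi.single 0 1 := by
    rw [← mulVec_mulVec, lreflection_sub_mulVec hnorm hv, mulVec_neg, lreflection_mulVec_self he,
      neg_neg]
  obtain ⟨R, hR, hRdet, hR0, hRs⟩ := exists_preservesLform_mulVec_eq_single_succ hn i
    (u := L₁ *ᵥ s) (by rw [← lform_single_zero_left (L₁ *ᵥ s), ← hL₁t, hL₁, hts])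
    (by rw [hL₁, hss])
  have hLt : (R * L₁) *ᵥ t = Pi.single 0 1 := by rw [← mulVec_mulVec, hL₁t, hR0]
  refine ⟨R * L₁, ⟨hR.mul hL₁, ?_, ?_⟩, hLt, by rw [← mulVec_mulVec, hRs]⟩
  · rw [det_mul, hRdet, det_mul, det_lreflection he, det_lreflection hv]; norm_num
  · rwa [PreservesLform.apply_zero_zero (hR.mul hL₁) hLt]

lemma exists_isLorentz_mulVec_of_null (hn : 2 ≤ n) (i : Fin n) {a b : Fin (n+1) → ℝ}
    (ha : lform n a a = 0) (hb : lform n b b = 0) (hab : 0 < lform n a b)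
    (hab₀ : 0 < a 0 + b 0) :
    ∃ L : Matrix (Fin (n+1)) (Fin (n+1)) ℝ, IsLorentz n L ∧ ∃ c : ℝ, c ≠ 0 ∧
      L *ᵥ a = c • (Pi.single 0 1 + Pi.single i.succ 1) ∧
      L *ᵥ b = c • (Pi.single 0 1 - Pi.single i.succ 1) := by
  set c := √(lform n a b / 2)
  have hc : 0 < c := Real.sqrt_pos.mpr (by linarith)
  have hc2 : c ^ 2 = lform n a b / 2 := Real.sq_sqrt (by linarith)
  set t := (2 * c)⁻¹ • (a + b)
  set s := (2 * c)⁻¹ • (a - b)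
  obtain ⟨L, hL, hLt, hLs⟩ : ∃ L : Matrix (Fin (n+1)) (Fin (n+1)) ℝ, IsLorentz n L ∧
      L *ᵥ t = Pi.single 0 1 ∧ L *ᵥ s = Pi.single i.succ 1 := by
    refine exists_isLorentz_mulVec_eq_single hn i ?_ ?_ ?_ ?_ <;>
      simp only [t, s, lform_smul_left, lform_smul_right, lform_add_left, lform_add_right,
        lform_sub_left, lform_sub_right, lform_comm b a, ha, hb, Pi.smul_apply, Pi.add_apply,
        smul_eq_mul]
    · field_simp; linarith
    · positivity
    · field_simp; linarith
    · ring
  have hat : a = c • (t + s) := by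
    ext p
    simp only [t, s, Pi.smul_apply, Pi.add_apply, Pi.sub_apply, smul_eq_mul]
    field_simp
    ring
  have hbt : b = c • (t - s) := by
    ext p
    simp only [t, s, Pi.smul_apply, Pi.add_apply, Pi.sub_apply, smul_eq_mul]
    field_simp
    ring
  refine ⟨L, hL, c, hc.ne', ?_, ?_⟩
  · rw [hat, mulVec_smul, mulVec_add, hLt, hLs]
  · rw [hbt, mulVec_smul, mulVec_sub, hLt, hLs]

lemma lform_tilde (x y : EuclideanSpace ℝ (Fin n)) :
    lform n (tilde n x) (tilde n y) = 1 - inner ℝ x y := by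
  simp [lform, tilde, PiLp.inner_apply, mul_comm]

lemma tilde_apply_zero (x : EuclideanSpace ℝ (Fin n)) : tilde n x 0 = 1 := rfl

lemma sphAct_eq_of_mulVec_tilde_eq_smul {g : Matrix (Fin (n+1)) (Fin (n+1)) ℝ}
    {x x' : EuclideanSpace ℝ (Fin n)} {c : ℝ} (hc : c ≠ 0)
    (h : g *ᵥ tilde n x = c • tilde n x') : sphAct n g x = x' := by
  ext i
  simp only [sphAct, PiLp.toLp_apply, h]
  simp [tilde, hc]

lemma sphAct_inv_mul_eq {L L' : Matrix (Fin (n+1)) (Fin (n+1)) ℝ} (hL' : IsLorentz n L')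
    {x x' : EuclideanSpace ℝ (Fin n)} {w : Fin (n+1) → ℝ} {c c' : ℝ} (hc : c ≠ 0) (hc' : c' ≠ 0)
    (h : L *ᵥ tilde n x = c • w) (h' : L' *ᵥ tilde n x' = c' • w) :
    sphAct n (L'⁻¹ * L) x = x' := by
  refine sphAct_eq_of_mulVec_tilde_eq_smul (div_ne_zero hc hc') ?_
  rw [← mulVec_mulVec, h, ← hL'.inv_mulVec_mulVec (tilde n x'), h', mulVec_smul, mulVec_smul,
    smul_smul, div_mul_cancel₀ _ hc']

lemma exists_isLorentz_mulVec_tilde (hn : 2 ≤ n) (i : Fin n) {x y : EuclideanSpace ℝ (Fin n)}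
    (hx : ‖x‖ = 1) (hy : ‖y‖ = 1) (hxy : x ≠ y) :
    ∃ L : Matrix (Fin (n+1)) (Fin (n+1)) ℝ, IsLorentz n L ∧ ∃ c : ℝ, c ≠ 0 ∧
      L *ᵥ tilde n x = c • (Pi.single 0 1 + Pi.single i.succ 1) ∧
      L *ᵥ tilde n y = c • (Pi.single 0 1 - Pi.single i.succ 1) := by
  have hdist : 0 < ‖x - y‖ ^ 2 := pow_pos (norm_pos_iff.mpr (sub_ne_zero.mpr hxy)) 2
  rw [norm_sub_sq_real, hx, hy] at hdist
  refine exists_isLorentz_mulVec_of_null hn i ?_ ?_ ?_ ?_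
  · rw [lform_tilde, real_inner_self_eq_norm_sq, hx]; norm_num
  · rw [lform_tilde, real_inner_self_eq_norm_sq, hy]; norm_num
  · rw [lform_tilde]; linarith
  · rw [tilde_apply_zero, tilde_apply_zero]; norm_num

end

/-- G acts transitively on ordered pairs of distinct points of S. -/
theorem statement7 (n : ℕ) (hn : 2 ≤ n)
    (x y x' y' : EuclideanSpace ℝ (Fin n))
    (hx : ‖x‖ = 1) (hy : ‖y‖ = 1) (hx' : ‖x'‖ = 1) (hy' : ‖y'‖ = 1)
    (hxy : x ≠ y) (hxy' : x' ≠ y') :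
    ∃ g : Matrix (Fin (n+1)) (Fin (n+1)) ℝ,
      IsLorentz n g ∧ sphAct n g x = x' ∧ sphAct n g y = y' := by
  let i : Fin n := ⟨0, by omega⟩
  obtain ⟨L, hL, c, hc, hLx, hLy⟩ := exists_isLorentz_mulVec_tilde hn i hx hy hxy
  obtain ⟨L', hL', c', hc', hLx', hLy'⟩ := exists_isLorentz_mulVec_tilde hn i hx' hy' hxy'
  exact ⟨L'⁻¹ * L, hL'.inv.mul hL, sphAct_inv_mul_eq hL' hc hc' hLx hLx',
    sphAct_inv_mul_eq hL' hc hc' hLy hLy'⟩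
end
end

section
/- Let σ, τ ∈ ℂ and f : S × S → ℂ. For g ∈ G define (P_{σ,τ} f)(g) = κ(g, 𝟏⁺)^{ρ+σ} κ(g, 𝟏⁻)^{ρ+τ} f(g(𝟏⁺), g(𝟏⁻)). Let t ∈ ℝ, R ∈ SO(n−1), and let h ∈ G be the matrix with h₀₀ = h₁₁ = cosh t, h₀₁ = h₁₀ = sinh t, lower-right block R, zeros elsewhere. Then for every g ∈ G: (P_{σ,τ} f)(g h) = e^{−t(σ−τ)} · (P_{σ,τ} f)(g). -/
open MeasureTheory Matrix

noncomputable section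

/-- The point 𝟏⁺ = (1,0,…,0) ∈ S ⊂ ℝ^{m+1}. -/
def onePlus (m : ℕ) : EuclideanSpace ℝ (Fin (m+1)) := EuclideanSpace.single 0 1

/-- The point 𝟏⁻ = (−1,0,…,0) ∈ S ⊂ ℝ^{m+1}. -/
def oneMinus (m : ℕ) : EuclideanSpace ℝ (Fin (m+1)) := EuclideanSpace.single 0 (-1)

/-- The element h ∈ G with h₀₀ = h₁₁ = cosh t, h₀₁ = h₁₀ = sinh t, lower-right
(n−1)×(n−1) block R and zeros elsewhere (here m = n − 1, so h is (m+2)×(m+2)). -/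
def hMat (m : ℕ) (t : ℝ) (R : Matrix (Fin m) (Fin m) ℝ) :
    Matrix (Fin (m+1+1)) (Fin (m+1+1)) ℝ :=
  Matrix.reindex (finSumFinEquiv.trans (finCongr (by omega)))
    (finSumFinEquiv.trans (finCongr (by omega)))
    (Matrix.fromBlocks !![Real.cosh t, Real.sinh t; Real.sinh t, Real.cosh t] 0 0 R)

/-- (P_{σ,τ} f)(g) = κ(g,𝟏⁺)^{ρ+σ} κ(g,𝟏⁻)^{ρ+τ} f(g(𝟏⁺), g(𝟏⁻)), with ρ = m/2. -/
def Pst (m : ℕ) (sig tau : ℂ)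
    (f : EuclideanSpace ℝ (Fin (m+1)) × EuclideanSpace ℝ (Fin (m+1)) → ℂ)
    (g : Matrix (Fin (m+1+1)) (Fin (m+1+1)) ℝ) : ℂ :=
  (kappa (m+1) g (onePlus m) : ℂ) ^ ((m : ℂ) / 2 + sig) *
    (kappa (m+1) g (oneMinus m) : ℂ) ^ ((m : ℂ) / 2 + tau) *
    f (sphAct (m+1) g (onePlus m), sphAct (m+1) g (oneMinus m))

/-! The boost `h` acts on the null vectors `𝟏̃± = (1, ±1, 0, …, 0)` by the scalars `e^{±t}`, so
`g h` and `g` move `𝟏±` to the same points of `S`, while `κ(gh, 𝟏±) = e^{∓t} κ(g, 𝟏±)`. As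
`κ(g, 𝟏±) > 0`, the complex powers split off `e^{∓t(ρ+σ)}`, `e^{±t(ρ+τ)}`, whose product is
`e^{−t(σ−τ)}`. Positivity of `κ` holds because `g` maps future causal vectors to future vectors:
compare with the unit timelike vector `g e₀` by the reversed Cauchy–Schwarz inequality. -/

lemma zero_lt_of_lform_pos {n : ℕ} {u y : Fin (n+1) → ℝ} (hu0 : 0 < u 0) (huu : lform n u u = 1)
    (hyy : 0 ≤ lform n y y) (huy : 0 < lform n u y) : 0 < y 0 := by
  unfold lform at huu hyy huy
  have hcs := Finset.sum_mul_sq_le_sq_mul_sq Finset.univ (fun i : Fin n => u i.succ)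
    (fun i => y i.succ)
  simp only [← sq] at huu hyy
  set S := ∑ i : Fin n, u i.succ * y i.succ
  set A := ∑ i : Fin n, u i.succ ^ 2
  set B := ∑ i : Fin n, y i.succ ^ 2
  have hA : 0 ≤ A := Finset.sum_nonneg fun i _ => sq_nonneg _
  by_contra! hy0
  have hS : S < u 0 * y 0 := by linarith
  have huy0 : u 0 * y 0 ≤ 0 := mul_nonpos_of_nonneg_of_nonpos hu0.le hy0
  nlinarith [mul_le_mul_of_nonneg_left (show B ≤ y 0 ^ 2 by linarith) hA,
    mul_pos (sub_pos.2 hS) (show 0 < -(S + u 0 * y 0) by linarith)]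

lemma IsLorentz.zero_lt_mulVec_zero {n : ℕ} {g : Matrix (Fin (n+1)) (Fin (n+1)) ℝ}
    (hg : IsLorentz n g) {x : Fin (n+1) → ℝ} (hxx : 0 ≤ lform n x x) (hx0 : 0 < x 0) :
    0 < (g *ᵥ x) 0 := by
  have he : lform n (Pi.single 0 1) (Pi.single 0 1) = 1 := by simp [lform]
  have hex : lform n (Pi.single 0 1) x = x 0 := by simp [lform]
  refine zero_lt_of_lform_pos (u := g *ᵥ Pi.single 0 1) ?_ ?_ ?_ ?_
  · simpa [mulVec_single_one] using hg.2.2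
  · rw [hg.1, he]
  · rwa [hg.1]
  · rwa [hg.1, hex]

lemma lform_tilde_self (n : ℕ) (x : EuclideanSpace ℝ (Fin n)) :
    lform n (tilde n x) (tilde n x) = 1 - ‖x‖ ^ 2 := by
  rw [EuclideanSpace.real_norm_sq_eq]
  simp [lform, tilde, sq]

lemma kappa_pos {n : ℕ} {g : Matrix (Fin (n+1)) (Fin (n+1)) ℝ} (hg : IsLorentz n g)
    {x : EuclideanSpace ℝ (Fin n)} (hx : ‖x‖ ≤ 1) : 0 < kappa n g x := by
  refine inv_pos.mpr (hg.zero_lt_mulVec_zero ?_ (by simp [tilde]))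
  rw [lform_tilde_self]
  nlinarith [norm_nonneg x]

section Stabilizer

variable {n : ℕ} {g k : Matrix (Fin (n+1)) (Fin (n+1)) ℝ} {x : EuclideanSpace ℝ (Fin n)} {a : ℝ}

lemma mul_mulVec_of_mulVec_eq_smul {v : Fin (n+1) → ℝ} (hk : k *ᵥ v = a • v) :
    (g * k) *ᵥ v = a • g *ᵥ v := by
  rw [← mulVec_mulVec, hk, mulVec_smul]

lemma kappa_mul_of_mulVec_tilde (hk : k *ᵥ tilde n x = a • tilde n x) :
    kappa n (g * k) x = a⁻¹ * kappa n g x := by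
  simp [kappa, mul_mulVec_of_mulVec_eq_smul hk, mul_comm]

lemma sphAct_mul_of_mulVec_tilde (hk : k *ᵥ tilde n x = a • tilde n x) (ha : a ≠ 0) :
    sphAct n (g * k) x = sphAct n g x := by
  ext i
  simp [sphAct, mul_mulVec_of_mulVec_eq_smul hk, mul_div_mul_left _ _ ha]

end Stabilizer

lemma tilde_single_zero (m : ℕ) (c : ℝ) :
    tilde (m+1) (EuclideanSpace.single 0 c) = Fin.cons 1 (Fin.cons c 0) := by
  ext k
  induction k using Fin.cases with
  | zero => rfl
  | succ i =>
    induction i using Fin.cases with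
    | zero => simp [tilde]
    | succ j => simp [tilde]

lemma cons_cons_zero_comp (m : ℕ) (a b : ℝ) :
    (Fin.cons a (Fin.cons b 0) : Fin (m+1+1) → ℝ) ∘
        (finSumFinEquiv.trans (finCongr (by omega)) : Fin 2 ⊕ Fin m ≃ Fin (m+1+1))
      = Sum.elim ![a, b] 0 := by
  ext (i | j)
  · fin_cases i <;> rfl
  · simp [finSumFinEquiv_apply_right, show j.addNat 2 = j.succ.succ from rfl]

lemma hMat_mulVec_cons_cons (m : ℕ) (t : ℝ) (R : Matrix (Fin m) (Fin m) ℝ) (a b : ℝ) :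
    hMat m t R *ᵥ Fin.cons a (Fin.cons b 0)
      = Fin.cons (a * Real.cosh t + b * Real.sinh t)
          (Fin.cons (a * Real.sinh t + b * Real.cosh t) 0) := by
  rw [hMat, reindex_apply, submatrix_mulVec_equiv, Equiv.symm_symm, cons_cons_zero_comp,
    Equiv.comp_symm_eq, cons_cons_zero_comp, fromBlocks_mulVec]
  ext (i | j)
  · fin_cases i <;> simp
  · simp

lemma hMat_mulVec_tilde_onePlus (m : ℕ) (t : ℝ) (R : Matrix (Fin m) (Fin m) ℝ) :
    hMat m t R *ᵥ tilde (m+1) (onePlus m) = Real.exp t • tilde (m+1) (onePlus m) := by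
  rw [onePlus, tilde_single_zero, hMat_mulVec_cons_cons, ← Real.cosh_add_sinh]
  ext k
  induction k using Fin.cases with
  | zero => simp
  | succ i => induction i using Fin.cases <;> simp [add_comm]

lemma hMat_mulVec_tilde_oneMinus (m : ℕ) (t : ℝ) (R : Matrix (Fin m) (Fin m) ℝ) :
    hMat m t R *ᵥ tilde (m+1) (oneMinus m) = Real.exp (-t) • tilde (m+1) (oneMinus m) := by
  rw [oneMinus, tilde_single_zero, hMat_mulVec_cons_cons, ← Real.cosh_sub_sinh]
  ext k
  induction k using Fin.cases with
  | zero => simp [sub_eq_add_neg]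
  | succ i => induction i using Fin.cases <;> simp [sub_eq_add_neg, add_comm]

lemma norm_onePlus (m : ℕ) : ‖onePlus m‖ = 1 := by
  simp [onePlus]

lemma norm_oneMinus (m : ℕ) : ‖oneMinus m‖ = 1 := by
  simp [oneMinus]

lemma ofReal_exp_mul_cpow (s : ℝ) {x : ℝ} (hx : 0 ≤ x) (w : ℂ) :
    ((Real.exp s * x : ℝ) : ℂ) ^ w = Complex.exp (s * w) * (x : ℂ) ^ w := by
  rw [Complex.ofReal_mul, Complex.mul_cpow_ofReal_nonneg (Real.exp_nonneg s) hx,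
    Complex.cpow_def_of_ne_zero (by simp), ← Complex.ofReal_log
    (Real.exp_nonneg s), Real.log_exp]

theorem statement17_general (m : ℕ) (sig tau : ℂ)
    (f : EuclideanSpace ℝ (Fin (m+1)) × EuclideanSpace ℝ (Fin (m+1)) → ℂ)
    (t : ℝ) (R : Matrix (Fin m) (Fin m) ℝ)
    (g : Matrix (Fin (m+1+1)) (Fin (m+1+1)) ℝ) (hg : IsLorentz (m+1) g) :
    Pst m sig tau f (g * hMat m t R)
      = Complex.exp (-(t : ℂ) * (sig - tau)) * Pst m sig tau f g := by
  have hplus := hMat_mulVec_tilde_onePlus m t R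
  have hminus := hMat_mulVec_tilde_oneMinus m t R
  rw [Pst, Pst, kappa_mul_of_mulVec_tilde hplus, kappa_mul_of_mulVec_tilde hminus,
    sphAct_mul_of_mulVec_tilde hplus (Real.exp_ne_zero _),
    sphAct_mul_of_mulVec_tilde hminus (Real.exp_ne_zero _)]
  simp only [← Real.exp_neg, neg_neg]
  rw [ofReal_exp_mul_cpow _ (kappa_pos hg (norm_onePlus m).le).le,
    ofReal_exp_mul_cpow _ (kappa_pos hg (norm_oneMinus m).le).le]
  have hexp : Complex.exp (((-t : ℝ) : ℂ) * ((m : ℂ) / 2 + sig))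
        * Complex.exp ((t : ℂ) * ((m : ℂ) / 2 + tau))
      = Complex.exp (-(t : ℂ) * (sig - tau)) := by
    rw [← Complex.exp_add]
    congr 1
    push_cast
    ring
  rw [← hexp]
  ring

/-- (P_{σ,τ} f)(g h) = e^{−t(σ−τ)} (P_{σ,τ} f)(g) for h ∈ H the element
with boost parameter t and rotation block R ∈ SO(n−1) (here n = m+1). -/
theorem statement17 (m : ℕ) (hm : 1 ≤ m) (sig tau : ℂ)
    (f : EuclideanSpace ℝ (Fin (m+1)) × EuclideanSpace ℝ (Fin (m+1)) → ℂ)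
    (t : ℝ) (R : Matrix (Fin m) (Fin m) ℝ)
    (hR : R ∈ Matrix.orthogonalGroup (Fin m) ℝ) (hRdet : R.det = 1)
    (g : Matrix (Fin (m+1+1)) (Fin (m+1+1)) ℝ) (hg : IsLorentz (m+1) g) :
    Pst m sig tau f (g * hMat m t R)
      = Complex.exp (-(t : ℂ) * (sig - tau)) * Pst m sig tau f g :=
  statement17_general m sig tau f t R g hg
end
end
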